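/- Let w, t, v, c ∈ Q and let 1 ≤ i, k, r, p ≤ m with i ≠ k and r ≠ p. Then the four-fold commutator [[E_{i,w}, E_{k,t}], [E*_{r,v}, E*_{p,c}]] acts on M as follows: (1) if i = p and k ≠ r, it sends (z,x,f) to (z, x + f_r(x)·⟨c,v⟩·⟨t,w⟩·x_k, f − f(x_k)·⟨w,t⟩·⟨v,c⟩·f_r); (2) if k = r and i ≠ p, it sends (z,x,f) to (z, x + f_p(x)·⟨v,c⟩·⟨w,t⟩·x_i, f − f(x_i)·⟨t,w⟩·⟨c,v⟩·f_p); (3) if i = r and k ≠ p, it sends (z,x,f) to (z, x − f_p(x)·⟨v,c⟩·⟨t,w⟩·x_k, f + f(x_k)·⟨w,t⟩·⟨c,v⟩·f_p); (4) if k = p and i ≠ r, it sends (z,x,f) to (z, x − f_r(x)·⟨c,v⟩·⟨w,t⟩·x_i, f + f(x_i)·⟨t,w⟩·⟨v,c⟩·f_r); (5) if i ∉ {r,p} and k ∉ {r,p}, it is the identity automorphism of M. -/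

import Mathlib

open QuadraticMap
open scoped commutatorElement

/-- The DSER elementary orthogonal transformation `E_{i,w}` on `M = Q ⊕ P ⊕ P*`,
`P = A^m`:  `E_{i,w}(z,x,f) = (z − f(xᵢ)•w, x + ⟨w,z⟩•xᵢ − f(xᵢ)·q(w)•xᵢ, f)`. -/
noncomputable def Eplus {A Q : Type*} [CommRing A] [AddCommGroup Q] [Module A Q]
    {m : ℕ} (q : QuadraticForm A Q) (i : Fin m) (w : Q) :
    (Q × (Fin m → A) × (Fin m → A)) ≃ₗ[A] (Q × (Fin m → A) × (Fin m → A)) where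
  toFun p := (p.1 - p.2.2 i • w,
    p.2.1 + polar ⇑q w p.1 • (Pi.single i 1 : Fin m → A)
      - (p.2.2 i * q w) • (Pi.single i 1 : Fin m → A),
    p.2.2)
  invFun p := (p.1 + p.2.2 i • w,
    p.2.1 - polar ⇑q w p.1 • (Pi.single i 1 : Fin m → A)
      - (p.2.2 i * q w) • (Pi.single i 1 : Fin m → A),
    p.2.2)
  map_add' p p' := by
    obtain ⟨z, x, f⟩ := p
    obtain ⟨z', x', f'⟩ := p'
    refine Prod.ext ?_ (Prod.ext ?_ rfl)
    · show z + z' - (f i + f' i) • w = (z - f i • w) + (z' - f' i • w)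
      module
    · show x + x' + polar ⇑q w (z + z') • (Pi.single i 1 : Fin m → A)
        - ((f i + f' i) * q w) • (Pi.single i 1 : Fin m → A) = _
      rw [polar_add_right]
      show _ = (x + polar ⇑q w z • (Pi.single i 1 : Fin m → A) - (f i * q w) • (Pi.single i 1 : Fin m → A))
        + (x' + polar ⇑q w z' • (Pi.single i 1 : Fin m → A) - (f' i * q w) • (Pi.single i 1 : Fin m → A))
      module
  map_smul' a p := by
    obtain ⟨z, x, f⟩ := p
    refine Prod.ext ?_ (Prod.ext ?_ rfl)
    · show a • z - (a • f) i • w = a • (z - f i • w)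
      simp only [Pi.smul_apply, smul_eq_mul]
      module
    · show a • x + polar ⇑q w (a • z) • (Pi.single i 1 : Fin m → A)
        - ((a • f) i * q w) • (Pi.single i 1 : Fin m → A)
        = a • (x + polar ⇑q w z • (Pi.single i 1 : Fin m → A) - (f i * q w) • (Pi.single i 1 : Fin m → A))
      rw [polar_smul_right]
      simp only [Pi.smul_apply, smul_eq_mul]
      module
  left_inv p := by
    obtain ⟨z, x, f⟩ := p
    refine Prod.ext ?_ (Prod.ext ?_ rfl)
    · show z - f i • w + f i • w = z
      module
    · show x + polar ⇑q w z • (Pi.single i 1 : Fin m → A) - (f i * q w) • (Pi.single i 1 : Fin m → A)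
        - polar ⇑q w (z - f i • w) • (Pi.single i 1 : Fin m → A)
        - (f i * q w) • (Pi.single i 1 : Fin m → A) = x
      rw [polar_sub_right, polar_smul_right, polar_self]
      simp only [smul_eq_mul]
      module
  right_inv p := by
    obtain ⟨z, x, f⟩ := p
    refine Prod.ext ?_ (Prod.ext ?_ rfl)
    · show z + f i • w - f i • w = z
      module
    · show x - polar ⇑q w z • (Pi.single i 1 : Fin m → A) - (f i * q w) • (Pi.single i 1 : Fin m → A)
        + polar ⇑q w (z + f i • w) • (Pi.single i 1 : Fin m → A)
        - (f i * q w) • (Pi.single i 1 : Fin m → A) = x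
      rw [polar_add_right, polar_smul_right, polar_self]
      simp only [smul_eq_mul]
      module

/-- The DSER elementary orthogonal transformation `E*_{i,w}` on `M = Q ⊕ P ⊕ P*`:
`E*_{i,w}(z,x,f) = (z − fᵢ(x)•w, x, f + ⟨w,z⟩•fᵢ − fᵢ(x)·q(w)•fᵢ)`. -/
noncomputable def Estar {A Q : Type*} [CommRing A] [AddCommGroup Q] [Module A Q]
    {m : ℕ} (q : QuadraticForm A Q) (i : Fin m) (w : Q) :
    (Q × (Fin m → A) × (Fin m → A)) ≃ₗ[A] (Q × (Fin m → A) × (Fin m → A)) where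
  toFun p := (p.1 - p.2.1 i • w,
    p.2.1,
    p.2.2 + polar ⇑q w p.1 • (Pi.single i 1 : Fin m → A)
      - (p.2.1 i * q w) • (Pi.single i 1 : Fin m → A))
  invFun p := (p.1 + p.2.1 i • w,
    p.2.1,
    p.2.2 - polar ⇑q w p.1 • (Pi.single i 1 : Fin m → A)
      - (p.2.1 i * q w) • (Pi.single i 1 : Fin m → A))
  map_add' p p' := by
    obtain ⟨z, x, f⟩ := p
    obtain ⟨z', x', f'⟩ := p'
    refine Prod.ext ?_ (Prod.ext rfl ?_)
    · show z + z' - (x i + x' i) • w = (z - x i • w) + (z' - x' i • w)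
      module
    · show f + f' + polar ⇑q w (z + z') • (Pi.single i 1 : Fin m → A)
        - ((x i + x' i) * q w) • (Pi.single i 1 : Fin m → A) = _
      rw [polar_add_right]
      show _ = (f + polar ⇑q w z • (Pi.single i 1 : Fin m → A)
          - (x i * q w) • (Pi.single i 1 : Fin m → A))
        + (f' + polar ⇑q w z' • (Pi.single i 1 : Fin m → A)
          - (x' i * q w) • (Pi.single i 1 : Fin m → A))
      module
  map_smul' a p := by
    obtain ⟨z, x, f⟩ := p
    refine Prod.ext ?_ (Prod.ext rfl ?_)
    · show a • z - (a • x) i • w = a • (z - x i • w)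
      simp only [Pi.smul_apply, smul_eq_mul]
      module
    · show a • f + polar ⇑q w (a • z) • (Pi.single i 1 : Fin m → A)
        - ((a • x) i * q w) • (Pi.single i 1 : Fin m → A)
        = a • (f + polar ⇑q w z • (Pi.single i 1 : Fin m → A)
          - (x i * q w) • (Pi.single i 1 : Fin m → A))
      rw [polar_smul_right]
      simp only [Pi.smul_apply, smul_eq_mul]
      module
  left_inv p := by
    obtain ⟨z, x, f⟩ := p
    refine Prod.ext ?_ (Prod.ext rfl ?_)
    · show z - x i • w + x i • w = z
      module
    · show f + polar ⇑q w z • (Pi.single i 1 : Fin m → A)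
        - (x i * q w) • (Pi.single i 1 : Fin m → A)
        - polar ⇑q w (z - x i • w) • (Pi.single i 1 : Fin m → A)
        - (x i * q w) • (Pi.single i 1 : Fin m → A) = f
      rw [polar_sub_right, polar_smul_right, polar_self]
      simp only [smul_eq_mul]
      module
  right_inv p := by
    obtain ⟨z, x, f⟩ := p
    refine Prod.ext ?_ (Prod.ext rfl ?_)
    · show z + x i • w - x i • w = z
      module
    · show f - polar ⇑q w z • (Pi.single i 1 : Fin m → A)
        - (x i * q w) • (Pi.single i 1 : Fin m → A)
        + polar ⇑q w (z + x i • w) • (Pi.single i 1 : Fin m → A)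
        - (x i * q w) • (Pi.single i 1 : Fin m → A) = f
      rw [polar_add_right, polar_smul_right, polar_self]
      simp only [smul_eq_mul]
      module

/-!
Both inner commutators are transvections: `⁅E_{i,w}, E_{k,t}⁆` fixes `z` and `f` and adds
`⟨w,t⟩ (f_i x_k − f_k x_i)` to `x`, while `⁅E*_{r,v}, E*_{p,c}⁆` fixes `z` and `x` and adds
`⟨v,c⟩ (x_r f_p − x_p f_r)` to `f`. The first reads only the coordinates `i, k` of `f`, the second
only the coordinates `r, p` of `x`. So they commute when `{i, k}` and `{r, p}` are disjoint, and
when the two pairs share exactly one index, a single term `⟨w,t⟩⟨v,c⟩` survives in each of `x`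
and `f`.
-/

section

variable {A Q : Type*} [CommRing A] [AddCommGroup Q] [Module A Q] {m : ℕ}
  (q : QuadraticForm A Q) (i k : Fin m) (w t z : Q) (x f : Fin m → A)

theorem Eplus_apply :
    Eplus q i w (z, x, f) = (z - f i • w,
      x + polar ⇑q w z • Pi.single i 1 - (f i * q w) • Pi.single i 1, f) := rfl

theorem Eplus_symm_apply :
    (Eplus q i w).symm (z, x, f) = (z + f i • w,
      x - polar ⇑q w z • Pi.single i 1 - (f i * q w) • Pi.single i 1, f) := rfl

theorem Estar_apply :
    Estar q i w (z, x, f) = (z - x i • w, x,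
      f + polar ⇑q w z • Pi.single i 1 - (x i * q w) • Pi.single i 1) := rfl

theorem Estar_symm_apply :
    (Estar q i w).symm (z, x, f) = (z + x i • w, x,
      f - polar ⇑q w z • Pi.single i 1 - (x i * q w) • Pi.single i 1) := rfl

theorem commutatorElement_Eplus_apply :
    ⁅Eplus q i w, Eplus q k t⁆ (z, x, f) = (z,
      x + (f i * polar ⇑q w t) • Pi.single k 1 - (f k * polar ⇑q w t) • Pi.single i 1, f) := by
  simp only [commutatorElement_def, LinearEquiv.mul_apply, LinearEquiv.coe_inv,
    Eplus_symm_apply, Eplus_apply]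
  refine Prod.ext ?_ (Prod.ext ?_ rfl) <;>
  · simp only [polar_add_right, polar_smul_right, polar_sub_right, polar_self, smul_eq_mul,
      polar_comm (⇑q) t w]
    module

theorem commutatorElement_Estar_apply :
    ⁅Estar q i w, Estar q k t⁆ (z, x, f) = (z, x,
      f + (x i * polar ⇑q w t) • Pi.single k 1 - (x k * polar ⇑q w t) • Pi.single i 1) := by
  simp only [commutatorElement_def, LinearEquiv.mul_apply, LinearEquiv.coe_inv,
    Estar_symm_apply, Estar_apply]
  refine Prod.ext ?_ (Prod.ext rfl ?_) <;>
  · simp only [polar_add_right, polar_smul_right, polar_sub_right, polar_self, smul_eq_mul,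
      polar_comm (⇑q) t w]
    module

end

theorem commutatorElement_commutatorElement_eq {G : Type*} [Group G] (a b c d : G) :
    ⁅⁅a, b⁆, ⁅c, d⁆⁆ = ⁅a, b⁆ * ⁅c, d⁆ * ⁅b, a⁆ * ⁅d, c⁆ := by
  rw [commutatorElement_def, commutatorElement_inv, commutatorElement_inv]

theorem fourfold_commutator_EplusEplus_EstarEstar_general
    {A Q : Type*} [CommRing A] [AddCommGroup Q] [Module A Q]
    {m : ℕ} (q : QuadraticForm A Q) (i k r p : Fin m)
    (hik : i ≠ k) (hrp : r ≠ p) (w t v c : Q) :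
    (i = p → k ≠ r → ∀ (z : Q) (x f : Fin m → A),
      ⁅⁅Eplus q i w, Eplus q k t⁆, ⁅Estar q r v, Estar q p c⁆⁆ (z, x, f)
        = (z,
           x + (x r * polar ⇑q c v * polar ⇑q t w) • (Pi.single k 1 : Fin m → A),
           f - (f k * polar ⇑q w t * polar ⇑q v c) • (Pi.single r 1 : Fin m → A))) ∧
    (k = r → i ≠ p → ∀ (z : Q) (x f : Fin m → A),
      ⁅⁅Eplus q i w, Eplus q k t⁆, ⁅Estar q r v, Estar q p c⁆⁆ (z, x, f)
        = (z,
           x + (x p * polar ⇑q v c * polar ⇑q w t) • (Pi.single i 1 : Fin m → A),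
           f - (f i * polar ⇑q t w * polar ⇑q c v) • (Pi.single p 1 : Fin m → A))) ∧
    (i = r → k ≠ p → ∀ (z : Q) (x f : Fin m → A),
      ⁅⁅Eplus q i w, Eplus q k t⁆, ⁅Estar q r v, Estar q p c⁆⁆ (z, x, f)
        = (z,
           x - (x p * polar ⇑q v c * polar ⇑q t w) • (Pi.single k 1 : Fin m → A),
           f + (f k * polar ⇑q w t * polar ⇑q c v) • (Pi.single p 1 : Fin m → A))) ∧
    (k = p → i ≠ r → ∀ (z : Q) (x f : Fin m → A),
      ⁅⁅Eplus q i w, Eplus q k t⁆, ⁅Estar q r v, Estar q p c⁆⁆ (z, x, f)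
        = (z,
           x - (x r * polar ⇑q c v * polar ⇑q w t) • (Pi.single i 1 : Fin m → A),
           f + (f i * polar ⇑q t w * polar ⇑q v c) • (Pi.single r 1 : Fin m → A))) ∧
    (i ≠ r → i ≠ p → k ≠ r → k ≠ p →
      ⁅⁅Eplus q i w, Eplus q k t⁆, ⁅Estar q r v, Estar q p c⁆⁆ = 1) := by
  refine ⟨?_, ?_, ?_, ?_, fun hir hip hkr hkp => LinearEquiv.ext fun ⟨z, x, f⟩ => ?_⟩
  all_goals
    try rintro rfl hne z x f
    simp only [commutatorElement_commutatorElement_eq, LinearEquiv.mul_apply,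
      commutatorElement_Eplus_apply, commutatorElement_Estar_apply, LinearEquiv.coe_one, id,
      Pi.add_apply, Pi.sub_apply, Pi.smul_apply, Pi.single_eq_same, Pi.single_eq_of_ne,
      Pi.single_eq_of_ne', ne_eq, not_false_eq_true, *]
    refine Prod.ext rfl (Prod.ext ?_ ?_) <;>
    · simp only [polar_comm (⇑q) w t, polar_comm (⇑q) v c]
      module

theorem fourfold_commutator_EplusEplus_EstarEstar
    {A Q : Type*} [CommRing A] [Invertible (2 : A)] [AddCommGroup Q] [Module A Q]
    {m : ℕ} (q : QuadraticForm A Q) (i k r p : Fin m)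
    (hik : i ≠ k) (hrp : r ≠ p) (w t v c : Q) :
    (i = p → k ≠ r → ∀ (z : Q) (x f : Fin m → A),
      ⁅⁅Eplus q i w, Eplus q k t⁆, ⁅Estar q r v, Estar q p c⁆⁆ (z, x, f)
        = (z,
           x + (x r * polar ⇑q c v * polar ⇑q t w) • (Pi.single k 1 : Fin m → A),
           f - (f k * polar ⇑q w t * polar ⇑q v c) • (Pi.single r 1 : Fin m → A))) ∧
    (k = r → i ≠ p → ∀ (z : Q) (x f : Fin m → A),
      ⁅⁅Eplus q i w, Eplus q k t⁆, ⁅Estar q r v, Estar q p c⁆⁆ (z, x, f)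
        = (z,
           x + (x p * polar ⇑q v c * polar ⇑q w t) • (Pi.single i 1 : Fin m → A),
           f - (f i * polar ⇑q t w * polar ⇑q c v) • (Pi.single p 1 : Fin m → A))) ∧
    (i = r → k ≠ p → ∀ (z : Q) (x f : Fin m → A),
      ⁅⁅Eplus q i w, Eplus q k t⁆, ⁅Estar q r v, Estar q p c⁆⁆ (z, x, f)
        = (z,
           x - (x p * polar ⇑q v c * polar ⇑q t w) • (Pi.single k 1 : Fin m → A),
           f + (f k * polar ⇑q w t * polar ⇑q c v) • (Pi.single p 1 : Fin m → A))) ∧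
    (k = p → i ≠ r → ∀ (z : Q) (x f : Fin m → A),
      ⁅⁅Eplus q i w, Eplus q k t⁆, ⁅Estar q r v, Estar q p c⁆⁆ (z, x, f)
        = (z,
           x - (x r * polar ⇑q c v * polar ⇑q w t) • (Pi.single i 1 : Fin m → A),
           f + (f i * polar ⇑q t w * polar ⇑q v c) • (Pi.single r 1 : Fin m → A))) ∧
    (i ≠ r → i ≠ p → k ≠ r → k ≠ p →
      ⁅⁅Eplus q i w, Eplus q k t⁆, ⁅Estar q r v, Estar q p c⁆⁆ = 1) :=
  fourfold_commutator_EplusEplus_EstarEstar_general q i k r p hik hrp w t v c
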